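/- Strengthened main theorem: Given a strong tournament T on n ≥ 3 vertices and any king k of T, there exists a chain of cycles C_3, C_4, ..., C_n (C_i of length i) such that k is a king of the subtournament induced by V(C_i) for each i, and for each 3 ≤ i ≤ n-1, C_{i+1} is obtained from C_i by replacing a single edge (x,y) of C_i by two edges (x,z) and (z,y) for some vertex z not on C_i. -/

import Mathlib

variable {V : Type*}

def IsTournament (r : V → V → Prop) : Prop :=
  (∀ v, ¬ r v v) ∧ ∀ x y : V, x ≠ y → (r x y ↔ ¬ r y x)

def IsStrong (r : V → V → Prop) : Prop :=
  ∀ x y : V, Relation.ReflTransGen r x y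

def IsKing (r : V → V → Prop) (k : V) : Prop :=
  ∀ v, v ≠ k → r k v ∨ ∃ u, r k u ∧ r u v

def IsKingOn (r : V → V → Prop) (S : Set V) (k : V) : Prop :=
  k ∈ S ∧ ∀ v ∈ S, v ≠ k → r k v ∨ ∃ u ∈ S, r k u ∧ r u v

def IsStrongOn (r : V → V → Prop) (S : Set V) : Prop :=
  ∀ x ∈ S, ∀ y ∈ S, Relation.ReflTransGen (fun a b => a ∈ S ∧ b ∈ S ∧ r a b) x y

def IsDiCycle (r : V → V → Prop) (c : List V) : Prop :=
  c.Nodup ∧ 3 ≤ c.length ∧ c.Chain' r ∧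
    ∀ x y, c.getLast? = some x → c.head? = some y → r x y

section Helpers

variable {r : V → V → Prop}

lemma tournament_total (hT : IsTournament r) {x y : V} (h : x ≠ y) : r x y ∨ r y x := by
  by_cases h' : r y x
  · exact Or.inr h'
  · exact Or.inl ((hT.2 x y h).mpr h')

lemma tournament_asymm (hT : IsTournament r) {x y : V} (h : r x y) : ¬ r y x := by
  by_cases hxy : x = y
  · subst hxy; exact absurd h (hT.1 x)
  · exact fun h' => ((hT.2 y x (Ne.symm hxy)).mp h') h

lemma r_ne (hT : IsTournament r) {x y : V} (h : r x y) : x ≠ y :=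
  fun he => hT.1 x (he ▸ h)

/-- Reachability within a set. -/
def Reach (r : V → V → Prop) (S : Set V) (x y : V) : Prop :=
  Relation.ReflTransGen (fun a b => a ∈ S ∧ b ∈ S ∧ r a b) x y

lemma isStrongOn_iff {S : Set V} : IsStrongOn r S ↔ ∀ x ∈ S, ∀ y ∈ S, Reach r S x y := Iff.rfl

lemma reach_mono {S T : Set V} (hST : S ⊆ T) {x y : V} (h : Reach r S x y) :
    Reach r T x y :=
  Relation.ReflTransGen.mono (p := fun a b => a ∈ T ∧ b ∈ T ∧ r a b) (fun _ _ h => ⟨hST h.1, hST h.2.1, h.2.2⟩) _ _ h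

lemma reach_tail {S : Set V} {x y : V} (h : Reach r S x y) (hne : x ≠ y) :
    ∃ c ∈ S, r c y := by
  rcases Relation.ReflTransGen.cases_tail h with h' | ⟨c, _, hc⟩
  · exact absurd h'.symm hne
  · exact ⟨c, hc.1, hc.2.2⟩

lemma reach_head {S : Set V} {x y : V} (h : Reach r S x y) (hne : x ≠ y) :
    ∃ c, (x ∈ S ∧ c ∈ S ∧ r x c) ∧ Reach r S c y := by
  rcases Relation.ReflTransGen.cases_head h with h' | ⟨c, h1, h2⟩
  · exact absurd h' hne
  · exact ⟨c, h1, h2⟩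

end Helpers

section Lists

variable {r : V → V → Prop}

/-- adjacent pair lemma -/
lemma exists_adj_pair {P Q : V → Prop} :
    ∀ (l : List V) (x : V), P x → (∀ b ∈ l, P b ∨ Q b) → (∃ b ∈ l, Q b) →
      ∃ p a b q, x :: l = p ++ a :: b :: q ∧ P a ∧ Q b := by
  intro l
  induction l with
  | nil => rintro x _ _ ⟨b, hb, _⟩; exact absurd hb List.not_mem_nil
  | cons y t ih =>
    rintro x hPx htot ⟨b, hb, hQb⟩
    by_cases hQy : Q y
    · exact ⟨[], x, y, t, rfl, hPx, hQy⟩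
    · have hPy : P y := (htot y List.mem_cons_self).resolve_right hQy
      have hbt : b ∈ t := by
        rcases List.mem_cons.mp hb with h | h
        · exact absurd (h ▸ hQb) hQy
        · exact h
      obtain ⟨p, a, b', q, heq, hPa, hQb'⟩ :=
        ih y hPy (fun c hc => htot c (List.mem_cons_of_mem _ hc)) ⟨b, hbt, hQb⟩
      exact ⟨x :: p, a, b', q, by rw [List.cons_append, ← heq], hPa, hQb'⟩

/-- middle insertion: all cycle properties -/
lemma cycle_insert_mid (hT : IsTournament r) (l1 l2 : List V) (z a b : V)
    (hla : l1.getLast? = some a) (hhb : l2.head? = some b)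
    (hch : (l1 ++ l2).Chain' r) (hN : (l1 ++ l2).Nodup) (hz : z ∉ l1 ++ l2)
    (haz : r a z) (hzb : r z b)
    (hwrap : ∀ x y, (l1 ++ l2).getLast? = some x → (l1 ++ l2).head? = some y → r x y) :
    (l1 ++ z :: l2).Nodup ∧ (l1 ++ z :: l2).Chain' r ∧
      (∀ x y, (l1 ++ z :: l2).getLast? = some x → (l1 ++ z :: l2).head? = some y → r x y) ∧
      (l1 ++ z :: l2).length = (l1 ++ l2).length + 1 ∧
      (∀ v, v ∈ l1 ++ z :: l2 ↔ v = z ∨ v ∈ l1 ++ l2) := by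
  have h1 : l1 ≠ [] := by rintro rfl; simp at hla
  have h2 : l2 ≠ [] := by rintro rfl; simp at hhb
  have hperm : (l1 ++ z :: l2).Perm (z :: (l1 ++ l2)) := List.perm_middle
  have hchold := List.isChain_append.mp hch
  refine ⟨?_, ?_, ?_, ?_, ?_⟩
  · exact hperm.nodup_iff.mpr (List.nodup_cons.mpr ⟨hz, hN⟩)
  · refine List.isChain_append.mpr ⟨hchold.1, ?_, ?_⟩
    · exact List.isChain_cons.mpr ⟨fun y hy => by rw [hhb] at hy; exact (Option.some_inj.mp hy) ▸ hzb, hchold.2.1⟩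
    · intro x hx y hy
      rw [hla] at hx
      simp only [List.head?_cons, Option.mem_some_iff] at hy
      rw [← Option.mem_some_iff.mp hx, ← hy]
      exact haz
  · intro x y hx hy
    apply hwrap x y
    · rw [List.getLast?_append] at hx ⊢
      have hzl2 : (z :: l2).getLast? = l2.getLast? := by
        rw [show z :: l2 = [z] ++ l2 from rfl, List.getLast?_append]
        cases hl2 : l2.getLast? with
        | none => exact absurd (List.getLast?_eq_none_iff.mp hl2) h2
        | some w => simp
      rw [hzl2] at hx
      exact hx
    · rw [List.head?_append_of_ne_nil _ h1] at hy
      rw [List.head?_append_of_ne_nil _ h1]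
      exact hy
  · simp [List.length_append]; omega
  · intro v
    rw [hperm.mem_iff, List.mem_cons]

end Lists

lemma cycle_insert (hT : IsTournament r) (l : List V) (z : V)
    (hN : l.Nodup) (hlen : 3 ≤ l.length) (hch : l.Chain' r)
    (hwrap : ∀ x y, l.getLast? = some x → l.head? = some y → r x y)
    (hz : z ∉ l) (hin : ∃ a ∈ l, r a z) (hout : ∃ b ∈ l, r z b) :
    ∃ l1 l2, l = l1 ++ l2 ∧
      (l1 ++ z :: l2).Nodup ∧ (l1 ++ z :: l2).Chain' r ∧
      (∀ x y, (l1 ++ z :: l2).getLast? = some x → (l1 ++ z :: l2).head? = some y → r x y) ∧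
      (l1 ++ z :: l2).length = l.length + 1 ∧
      (∀ v, v ∈ l1 ++ z :: l2 ↔ v = z ∨ v ∈ l) := by
  have htot : ∀ w ∈ l, r w z ∨ r z w := by
    intro w hw
    exact tournament_total hT (fun he => hz (he ▸ hw))
  cases l with
  | nil => simp at hlen
  | cons x t =>
  set l := x :: t with hl
  by_cases hzx : r z x
  · -- z beats the head
    obtain ⟨w, hw⟩ : ∃ w, l.getLast? = some w := ⟨l.getLast (by simp [hl]), List.getLast?_eq_getLast _⟩
    have hwl : w ∈ l := by
      have h' := List.getLast?_eq_getLast (l := l) (by simp [hl])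
      rw [hw] at h'
      have := Option.some_inj.mp h'
      subst this
      exact List.getLast_mem _
    by_cases hwz : r w z
    · -- append at the end
      refine ⟨l, [], (List.append_nil l).symm, ?_, ?_, ?_, ?_, ?_⟩
      · have : (l ++ [z]).Perm (z :: l) := by
          simpa using (List.perm_middle (a := z) (l₁ := l) (l₂ := []))
        exact this.nodup_iff.mpr (List.nodup_cons.mpr ⟨hz, hN⟩)
      · refine List.isChain_append.mpr ⟨hch, List.isChain_singleton z, ?_⟩
        intro u hu v hv
        simp only [List.head?_cons, Option.mem_some_iff] at hv
        rw [hw] at hu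
        rw [← Option.mem_some_iff.mp hu, ← hv]
        exact hwz
      · intro u v hu hv
        rw [List.getLast?_concat] at hu
        rw [List.head?_append_of_ne_nil _ (by simp [hl])] at hv
        simp only [hl, List.head?_cons, Option.some_inj] at hv hu
        rw [← hu, ← hv]
        exact hzx
      · simp
      · intro v; simp [or_comm]
    · -- z beats head and last: reverse and find adjacent pair
      have hzw : r z w := (htot w hwl).resolve_left hwz
      obtain ⟨a0, ha0l, ha0⟩ := hin
      have ha0w : a0 ≠ w := fun he => hwz (he ▸ ha0)
      obtain ⟨c, cs, hrl⟩ := List.exists_cons_of_ne_nil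
        (show l.reverse ≠ [] by simp [hl])
      have hcw : c = w := by
        have h' : l.reverse.head? = some w := by rw [List.head?_reverse]; exact hw
        rw [hrl] at h'
        simpa using h'
      have ht' : l.reverse = w :: cs := by rw [hrl, hcw]
      set t' := cs with ht''
      have ha0t' : a0 ∈ t' := by
        have : a0 ∈ l.reverse := List.mem_reverse.mpr ha0l
        rw [ht'] at this
        exact (List.mem_cons.mp this).resolve_left ha0w
      obtain ⟨p, a, b, q, heq, hPa, hQb⟩ :=
        exists_adj_pair (P := fun v => r z v) (Q := fun v => r v z) t' w hzw
          (fun c hc => (htot c (by rw [← List.mem_reverse, ht']; exact List.mem_cons_of_mem _ hc)).symm)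
          ⟨a0, ha0t', ha0⟩
      -- l = (q.reverse ++ [b]) ++ (a :: p.reverse)
      have hldecomp : l = (q.reverse ++ [b]) ++ (a :: p.reverse) := by
        have : l.reverse = p ++ a :: b :: q := by rw [ht', heq]
        have h2 := congrArg List.reverse this
        rw [List.reverse_reverse] at h2
        rw [h2]
        simp [List.reverse_append]
      have hla : (q.reverse ++ [b]).getLast? = some b := List.getLast?_concat
      have hhb : (a :: p.reverse).head? = some a := rfl
      rw [hldecomp] at hch hN hz hwrap ⊢
      obtain ⟨n1, n2, n3, n4, n5⟩ := cycle_insert_mid hT _ _ z b a hla hhb hch hN hz hQb hPa hwrap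
      exact ⟨_, _, rfl, n1, n2, n3, n4, n5⟩
  · -- head beats z
    have hxz : r x z := (htot x (by simp [hl])).resolve_right hzx
    obtain ⟨b0, hb0l, hb0⟩ := hout
    have hb0x : b0 ≠ x := fun he => hzx (he ▸ hb0)
    have hb0t : b0 ∈ t := by
      rw [hl] at hb0l
      exact (List.mem_cons.mp hb0l).resolve_left hb0x
    obtain ⟨p, a, b, q, heq, hPa, hQb⟩ :=
      exists_adj_pair (P := fun v => r v z) (Q := fun v => r z v) t x hxz
        (fun c hc => htot c (by rw [hl]; exact List.mem_cons_of_mem _ hc))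
        ⟨b0, hb0t, hb0⟩
    have hldecomp : l = (p ++ [a]) ++ (b :: q) := by
      rw [hl, heq]; simp
    have hla : (p ++ [a]).getLast? = some a := List.getLast?_concat
    have hhb : (b :: q).head? = some b := rfl
    rw [hldecomp] at hch hN hz hwrap ⊢
    obtain ⟨n1, n2, n3, n4, n5⟩ := cycle_insert_mid hT _ _ z a b hla hhb hch hN hz hPa hQb hwrap
    exact ⟨_, _, rfl, n1, n2, n3, n4, n5⟩

section LemA

variable {r : V → V → Prop}

lemma mem_diff_singleton {S : Set V} {a b : V} : a ∈ S \ {b} ↔ a ∈ S ∧ a ≠ b := by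
  simp [Set.mem_diff]

/-- paths within S' starting in F stay in F, given that there is no path from outside F into F -/
lemma reach_stay {S' F : Set V} (hF : ∀ u ∈ S', u ∉ F → ∀ v ∈ F, ¬ Reach r S' u v)
    (hFS : F ⊆ S') {x y : V} (hx : x ∈ F) (hy : y ∈ F) (h : Reach r S' x y) :
    Reach r F x y := by
  have key := Relation.ReflTransGen.head_induction_on
    (motive := fun a (_ : Reach r S' a y) => a ∈ F → Reach r F a y) h
    (fun _ => Relation.ReflTransGen.refl)
    (fun {a c} h' htail ih ha => by
      have hcF : c ∈ F := by
        by_contra hcF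
        exact hF c h'.2.1 hcF y hy htail
      exact Relation.ReflTransGen.head ⟨ha, hcF, h'.2.2⟩ (ih hcF))
  exact key hx

lemma case_F1 (hT : IsTournament r) (S : Set V) (k z0 w : V) (hfin : S.Finite)
    (hm : 4 ≤ S.ncard)
    (hz0S : z0 ∈ S) (hz0k : r z0 k) (hkS : k ∈ S)
    (hkdom : ∀ u ∈ S \ {z0}, u ≠ k → r k u)
    (hreachz0 : ∀ x ∈ S, x ≠ k → Reach r (S \ {k}) x z0)
    (hwS : w ∈ S) (hwz0' : w ≠ z0) (hwk : w ≠ k) (hwz0 : r w z0) :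
    ∃ z ∈ S, z ≠ k ∧ IsStrongOn r (S \ {z}) ∧ IsKingOn r (S \ {z}) k := by
  classical
  have hz0k' : z0 ≠ k := r_ne hT hz0k
  set D := (S \ {z0}) \ {k} with hDdef
  have hDmem : ∀ u, u ∈ D ↔ u ∈ S ∧ u ≠ z0 ∧ u ≠ k := by
    intro u
    constructor
    · intro h
      obtain ⟨h1, h2⟩ := mem_diff_singleton.mp h
      obtain ⟨h3, h4⟩ := mem_diff_singleton.mp h1
      exact ⟨h3, h4, h2⟩
    · rintro ⟨h1, h2, h3⟩
      exact mem_diff_singleton.mpr ⟨mem_diff_singleton.mpr ⟨h1, h2⟩, h3⟩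
  set N := {u | u ∈ D ∧ r u z0} with hNdef
  have hwD : w ∈ D := (hDmem w).mpr ⟨hwS, hwz0', hwk⟩
  have hwN : w ∈ N := ⟨hwD, hwz0⟩
  set Rl : ℕ → Set V :=
    fun i => Nat.rec N (fun _ prev => prev ∪ {x | x ∈ D ∧ ∃ v ∈ prev, r x v}) i with hRldef
  have hRl0 : Rl 0 = N := rfl
  have hRlsucc : ∀ i, Rl (i + 1) = Rl i ∪ {x | x ∈ D ∧ ∃ v ∈ Rl i, r x v} := fun _ => rfl
  have hRlsub : ∀ i, ∀ x ∈ Rl i, x ∈ D := by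
    intro i
    induction i with
    | zero => exact fun x hx => hx.1
    | succ j ih =>
      intro x hx
      rcases hx with hx | hx
      · exact ih x hx
      · exact hx.1
  have hlev : ∀ x ∈ D, ∃ i, x ∈ Rl i := by
    intro x hxD
    obtain ⟨hxS, hxz0, hxk⟩ := (hDmem x).mp hxD
    have key := Relation.ReflTransGen.head_induction_on
      (motive := fun a (_ : Reach r (S \ {k}) a z0) => a ∈ D → ∃ i, a ∈ Rl i)
      (hreachz0 x hxS hxk)
      (fun ha => absurd rfl ((hDmem z0).mp ha).2.1)
      (fun {a c} h' htail ih ha => by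
        by_cases hc : c = z0
        · exact ⟨0, ⟨ha, hc ▸ h'.2.2⟩⟩
        · have hcD : c ∈ D := (hDmem c).mpr
            ⟨(mem_diff_singleton.mp h'.2.1).1, hc, (mem_diff_singleton.mp h'.2.1).2⟩
          obtain ⟨i, hi⟩ := ih hcD
          exact ⟨i + 1, Or.inr ⟨ha, c, hi, h'.2.2⟩⟩)
    exact key hxD
  set mfun : V → ℕ := fun x => sInf {i | x ∈ Rl i} with hmfundef
  have hmfun_mem : ∀ x ∈ D, x ∈ Rl (mfun x) := fun x hx => Nat.sInf_mem (hlev x hx)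
  have hDfin : D.Finite := hfin.subset (fun u hu => ((hDmem u).mp hu).1)
  obtain ⟨z, hzD, hzmax⟩ := Set.exists_max_image D mfun hDfin ⟨w, hwD⟩
  obtain ⟨hzS, hzz0, hzk⟩ := (hDmem z).mp hzD
  have hz0z : z0 ≠ z := fun he => hzz0 he.symm
  have hkz : k ≠ z := fun he => hzk he.symm
  have hdesc : ∀ i, ∀ x ∈ D, x ≠ z → mfun x = i → Reach r (S \ {z}) x z0 := by
    intro i
    induction i using Nat.strong_induction_on with
    | _ i IH2 =>
    intro x hxD hxz hmi
    obtain ⟨hxS, hxz0, hxk⟩ := (hDmem x).mp hxD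
    have hxRl : x ∈ Rl i := hmi ▸ hmfun_mem x hxD
    cases i with
    | zero =>
      exact Relation.ReflTransGen.single
        ⟨mem_diff_singleton.mpr ⟨hxS, hxz⟩, mem_diff_singleton.mpr ⟨hz0S, hz0z⟩, hxRl.2⟩
    | succ j =>
      rcases hxRl with hx' | ⟨_, v, hvRl, hxv⟩
      · have : mfun x ≤ j := Nat.sInf_le hx'
        omega
      · have hvD : v ∈ D := hRlsub j v hvRl
        have hmv : mfun v ≤ j := Nat.sInf_le hvRl
        have hvz : v ≠ z := by
          intro he
          subst he
          have := hzmax x hxD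
          omega
        refine Relation.ReflTransGen.head
          ⟨mem_diff_singleton.mpr ⟨hxS, hxz⟩,
           mem_diff_singleton.mpr ⟨((hDmem v).mp hvD).1, hvz⟩, hxv⟩ ?_
        exact IH2 (mfun v) (by omega) v hvD hvz rfl
  have hu2 : ∃ u ∈ N, u ≠ z := by
    by_cases hzN : z ∈ N
    · have hmz : mfun z = 0 := Nat.le_zero.mp (Nat.sInf_le (show z ∈ Rl 0 from hzN))
      have hcard1 : (S \ {z0}).ncard + 1 = S.ncard :=
        Set.ncard_diff_singleton_add_one hz0S hfin
      have hcard2 : D.ncard + 1 = (S \ {z0}).ncard :=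
        Set.ncard_diff_singleton_add_one (mem_diff_singleton.mpr ⟨hkS, hz0k'.symm⟩)
          (hfin.subset Set.diff_subset)
      obtain ⟨d, hdD, hdz⟩ := Set.exists_ne_of_one_lt_ncard (s := D) (by omega) z
      have hd0 : mfun d = 0 := by
        have := hzmax d hdD
        omega
      have : d ∈ Rl 0 := hd0 ▸ hmfun_mem d hdD
      exact ⟨d, this, hdz⟩
    · exact ⟨w, hwN, fun he => hzN (he ▸ hwN)⟩
  obtain ⟨u2, hu2N, hu2z⟩ := hu2
  obtain ⟨hu2D, hu2z0⟩ := hu2N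
  obtain ⟨hu2S, hu2z0', hu2k⟩ := (hDmem u2).mp hu2D
  have hkmem : k ∈ S \ {z} := mem_diff_singleton.mpr ⟨hkS, hkz⟩
  have hz0mem : z0 ∈ S \ {z} := mem_diff_singleton.mpr ⟨hz0S, hz0z⟩
  have hu2mem : u2 ∈ S \ {z} := mem_diff_singleton.mpr ⟨hu2S, hu2z⟩
  have hku2 : r k u2 := hkdom u2 (mem_diff_singleton.mpr ⟨hu2S, hu2z0'⟩) hu2k
  have hreachz0' : ∀ x ∈ S \ {z}, Reach r (S \ {z}) x z0 := by
    intro x hx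
    obtain ⟨hxS, hxz⟩ := mem_diff_singleton.mp hx
    by_cases hxz0 : x = z0
    · subst hxz0; exact Relation.ReflTransGen.refl
    · by_cases hxk : x = k
      · subst hxk
        exact Relation.ReflTransGen.head ⟨hx, hu2mem, hku2⟩
          (Relation.ReflTransGen.single ⟨hu2mem, hz0mem, hu2z0⟩)
      · exact hdesc (mfun x) x ((hDmem x).mpr ⟨hxS, hxz0, hxk⟩) hxz rfl
  have hfromz0 : ∀ y ∈ S \ {z}, Reach r (S \ {z}) z0 y := by
    intro y hy
    obtain ⟨hyS, hyz⟩ := mem_diff_singleton.mp hy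
    by_cases hyz0 : y = z0
    · subst hyz0; exact Relation.ReflTransGen.refl
    · by_cases hyk : y = k
      · subst hyk; exact Relation.ReflTransGen.single ⟨hz0mem, hy, hz0k⟩
      · exact Relation.ReflTransGen.head ⟨hz0mem, hkmem, hz0k⟩
          (Relation.ReflTransGen.single
            ⟨hkmem, hy, hkdom y (mem_diff_singleton.mpr ⟨hyS, hyz0⟩) hyk⟩)
  refine ⟨z, hzS, hzk, fun x hx y hy => (hreachz0' x hx).trans (hfromz0 y hy),
    hkmem, fun v hv hvk => ?_⟩
  obtain ⟨hvS, hvz⟩ := mem_diff_singleton.mp hv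
  by_cases hvz0 : v = z0
  · exact Or.inr ⟨u2, hu2mem, hku2, hvz0 ▸ hu2z0⟩
  · exact Or.inl (hkdom v (mem_diff_singleton.mpr ⟨hvS, hvz0⟩) hvk)

lemma case_F3 (hT : IsTournament r) (S F : Set V) (k z0 w : V)
    (hz0S : z0 ∈ S) (hz0k : r z0 k) (hkS : k ∈ S) (hkF : k ∈ F)
    (hFS' : F ⊆ S \ {z0})
    (houtF : ∀ v ∈ F, ∀ u ∈ S \ {z0}, u ∉ F → r v u)
    (hFreach : ∀ x ∈ F, ∀ y ∈ F, Reach r F x y)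
    (hreachz0out : ∀ x, x ∈ S → x ∉ F → Reach r (S \ F) x z0)
    (hFfin : F.Finite)
    (hwS' : w ∈ S \ {z0}) (hwF : w ∉ F) (hwz0 : r w z0)
    (h3 : F.ncard = 3) :
    ∃ z ∈ S, z ≠ k ∧ IsStrongOn r (S \ {z}) ∧ IsKingOn r (S \ {z}) k := by
  classical
  have hFS : F ⊆ S := fun v hv => (hFS' hv).1
  have hz0F : z0 ∉ F := fun h => (mem_diff_singleton.mp (hFS' h)).2 rfl
  have hFk2 : (F \ {k}).ncard = 2 := by
    have := Set.ncard_diff_singleton_add_one hkF hFfin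
    omega
  obtain ⟨c, d, hcd, hFcd⟩ := Set.ncard_eq_two.mp hFk2
  have hcFk : c ∈ F \ {k} := by rw [hFcd]; exact Set.mem_insert c {d}
  have hdFk : d ∈ F \ {k} := by rw [hFcd]; exact Set.mem_insert_of_mem c rfl
  have hcF : c ∈ F := hcFk.1
  have hdF : d ∈ F := hdFk.1
  have hck : c ≠ k := (mem_diff_singleton.mp hcFk).2
  have hdk : d ≠ k := (mem_diff_singleton.mp hdFk).2
  have hFeqmem : ∀ w' ∈ F, w' = k ∨ w' = c ∨ w' = d := by
    intro w' hw'
    by_cases hw'k : w' = k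
    · exact Or.inl hw'k
    · have : w' ∈ F \ {k} := mem_diff_singleton.mpr ⟨hw', hw'k⟩
      rw [hFcd] at this
      right; simpa using this
  have hwit : ∃ b ∈ F, b ≠ k ∧ r b k := by
    obtain ⟨b, hbF, hbk⟩ := reach_tail (hFreach c hcF k hkF) hck
    exact ⟨b, hbF, fun he => hT.1 k (he ▸ hbk), hbk⟩
  obtain ⟨b, hbF, hbk, hrbk⟩ := hwit
  have ha : ∃ a, a ∈ F ∧ a ≠ k ∧ a ≠ b ∧ (∀ w' ∈ F, w' = k ∨ w' = a ∨ w' = b) := by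
    rcases hFeqmem b hbF with h | h | h
    · exact absurd h hbk
    · refine ⟨d, hdF, hdk, ?_, ?_⟩
      · rw [h]; exact hcd.symm
      · intro w' hw'
        rcases hFeqmem w' hw' with h' | h' | h'
        · exact Or.inl h'
        · exact Or.inr (Or.inr (h'.trans h.symm))
        · exact Or.inr (Or.inl h')
    · refine ⟨c, hcF, hck, ?_, ?_⟩
      · rw [h]; exact hcd
      · intro w' hw'
        rcases hFeqmem w' hw' with h' | h' | h'
        · exact Or.inl h'
        · exact Or.inr (Or.inl h')
        · exact Or.inr (Or.inr (h'.trans h.symm))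
  obtain ⟨a, haF, hak, hab, hFmem⟩ := ha
  have hka : r k a := by
    by_contra hka
    obtain ⟨c0, ⟨_, hc0F, hkc0⟩, _⟩ := reach_head (hFreach k hkF a haF) (Ne.symm hak)
    rcases hFmem c0 hc0F with h0 | h0 | h0
    · rw [h0] at hkc0; exact hT.1 k hkc0
    · rw [h0] at hkc0; exact hka hkc0
    · rw [h0] at hkc0; exact tournament_asymm hT hrbk hkc0
  have hbS : b ∈ S := hFS hbF
  have hbz0 : b ≠ z0 := (mem_diff_singleton.mp (hFS' hbF)).2
  have hkb : k ≠ b := hbk.symm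
  have hwz : w ≠ b := fun he => hwF (he ▸ hbF)
  have hwS : w ∈ S := (mem_diff_singleton.mp hwS').1
  have hsub1 : S \ F ⊆ S \ {b} := fun v hv =>
    mem_diff_singleton.mpr ⟨hv.1, fun he => hv.2 (he ▸ hbF)⟩
  have hkmem : k ∈ S \ {b} := mem_diff_singleton.mpr ⟨hkS, hkb⟩
  have hz0mem : z0 ∈ S \ {b} := mem_diff_singleton.mpr ⟨hz0S, fun he => hz0F (he ▸ hbF)⟩
  have hamem : a ∈ S \ {b} := mem_diff_singleton.mpr ⟨hFS haF, hab⟩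
  have hwmem : w ∈ S \ {b} := mem_diff_singleton.mpr ⟨hwS, hwz⟩
  have hreachz0' : ∀ x ∈ S \ {b}, Reach r (S \ {b}) x z0 := by
    intro x hx
    obtain ⟨hxS, hxb⟩ := mem_diff_singleton.mp hx
    by_cases hxF : x ∈ F
    · have hxw : r x w := houtF x hxF w hwS' hwF
      exact Relation.ReflTransGen.head ⟨hx, hwmem, hxw⟩
        (reach_mono hsub1 (hreachz0out w hwS hwF))
    · exact reach_mono hsub1 (hreachz0out x hxS hxF)
  have hfromz0 : ∀ y ∈ S \ {b}, Reach r (S \ {b}) z0 y := by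
    intro y hy
    obtain ⟨hyS, hyb⟩ := mem_diff_singleton.mp hy
    by_cases hyz0 : y = z0
    · subst hyz0; exact Relation.ReflTransGen.refl
    · by_cases hyF : y ∈ F
      · rcases hFmem y hyF with rfl | rfl | rfl
        · exact Relation.ReflTransGen.single ⟨hz0mem, hy, hz0k⟩
        · exact Relation.ReflTransGen.head ⟨hz0mem, hkmem, hz0k⟩
            (Relation.ReflTransGen.single ⟨hkmem, hy, hka⟩)
        · exact absurd rfl hyb
      · exact Relation.ReflTransGen.head ⟨hz0mem, hkmem, hz0k⟩
          (Relation.ReflTransGen.single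
            ⟨hkmem, hy, houtF k hkF y (mem_diff_singleton.mpr ⟨hyS, hyz0⟩) hyF⟩)
  refine ⟨b, hbS, hbk, fun x hx y hy => (hreachz0' x hx).trans (hfromz0 y hy),
    hkmem, fun v hv hvk => ?_⟩
  obtain ⟨hvS, hvb⟩ := mem_diff_singleton.mp hv
  by_cases hvz0 : v = z0
  · exact Or.inr ⟨w, hwmem, houtF k hkF w hwS' hwF, hvz0 ▸ hwz0⟩
  · by_cases hvF : v ∈ F
    · rcases hFmem v hvF with rfl | rfl | rfl
      · exact absurd rfl hvk
      · exact Or.inl hka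
      · exact absurd rfl hvb
    · exact Or.inl (houtF k hkF v (mem_diff_singleton.mpr ⟨hvS, hvz0⟩) hvF)

lemma lemA (hT : IsTournament r) :
    ∀ m : ℕ, ∀ S : Set V, ∀ k : V, S.Finite → S.ncard = m → 4 ≤ m →
      IsStrongOn r S → IsKingOn r S k →
      ∃ z ∈ S, z ≠ k ∧ IsStrongOn r (S \ {z}) ∧ IsKingOn r (S \ {z}) k := by
  intro m
  induction m using Nat.strong_induction_on with
  | _ m IH =>
  intro S k hfin hcard hm hstrong hking
  classical
  have hkS : k ∈ S := hking.1
  -- k has an in-neighbour in S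
  have hE : ∃ z0 ∈ S, r z0 k := by
    have h2 : ∃ y ∈ S, y ≠ k := by
      by_contra h
      push_neg at h
      have hsub : S ⊆ {k} := fun y hy => h y hy
      have := Set.ncard_le_ncard hsub (Set.finite_singleton k)
      simp [Set.ncard_singleton] at this
      omega
    obtain ⟨y, hyS, hyk⟩ := h2
    exact reach_tail (hstrong y hyS k hkS) hyk
  by_cases hcase : ∃ z ∈ S, r z k ∧ IsStrongOn r (S \ {z})
  · obtain ⟨z, hzS, hzk, hzstrong⟩ := hcase
    have hzk' : z ≠ k := r_ne hT hzk
    refine ⟨z, hzS, hzk', hzstrong,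
      ⟨mem_diff_singleton.mpr ⟨hkS, hzk'.symm⟩, fun v hv hvk => ?_⟩⟩
    rcases hking.2 v (mem_diff_singleton.mp hv).1 hvk with h | ⟨u, huS, h1, h2⟩
    · exact Or.inl h
    · refine Or.inr ⟨u, mem_diff_singleton.mpr ⟨huS, ?_⟩, h1, h2⟩
      exact fun he => tournament_asymm hT hzk (he ▸ h1)
  · push_neg at hcase
    obtain ⟨z0, hz0S, hz0k⟩ := hE
    have hz0k' : z0 ≠ k := r_ne hT hz0k
    have hS'ns : ¬ IsStrongOn r (S \ {z0}) := hcase z0 hz0S hz0k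
    set S' := S \ {z0} with hS'def
    have hz0S' : z0 ∉ S' := fun h => (mem_diff_singleton.mp h).2 rfl
    set F := {v | v ∈ S' ∧ ∀ u ∈ S', Reach r S' v u} with hFdef
    have hFS' : F ⊆ S' := fun v hv => hv.1
    have hFS : F ⊆ S := fun v hv => hv.1.1
    have hkS' : k ∈ S' := mem_diff_singleton.mpr ⟨hkS, hz0k'.symm⟩
    have hkF : k ∈ F := by
      refine ⟨hkS', fun u huS' => ?_⟩
      by_cases huk : u = k
      · subst huk; exact Relation.ReflTransGen.refl
      · rcases hking.2 u (huS'.1) huk with hdir | ⟨w, hwS, hkw, hwu⟩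
        · exact Relation.ReflTransGen.single ⟨hkS', huS', hdir⟩
        · have hwz0 : w ≠ z0 := fun he => tournament_asymm hT hz0k (he ▸ hkw)
          have hwS' : w ∈ S' := mem_diff_singleton.mpr ⟨hwS, hwz0⟩
          exact Relation.ReflTransGen.head ⟨hkS', hwS', hkw⟩
            (Relation.ReflTransGen.single ⟨hwS', huS', hwu⟩)
    have hFnotall : ∃ u1 ∈ S', u1 ∉ F := by
      by_contra h
      push_neg at h
      exact hS'ns (fun x hx y hy => (h x hx).2 y hy)
    have hnoreachinF : ∀ u ∈ S', u ∉ F → ∀ v ∈ F, ¬ Reach r S' u v := by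
      intro u huS' huF v hvF hreach
      exact huF ⟨huS', fun w hwS' => hreach.trans (hvF.2 w hwS')⟩
    have houtF : ∀ v ∈ F, ∀ u ∈ S', u ∉ F → r v u := by
      intro v hvF u huS' huF
      have hne : u ≠ v := fun he => huF (he ▸ hvF)
      rcases tournament_total hT hne with h | h
      · exact absurd (Relation.ReflTransGen.single ⟨huS', hvF.1, h⟩)
          (hnoreachinF u huS' huF v hvF)
      · exact h
    have hEF : ∀ v ∈ S', r v k → v ∈ F := by
      intro v hvS' hvk
      by_contra hvF
      exact tournament_asymm hT hvk (houtF k hkF v hvS' hvF)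
    have hFreach : ∀ x ∈ F, ∀ y ∈ F, Reach r F x y := by
      intro x hxF y hyF
      exact reach_stay hnoreachinF hFS' hxF hyF (hxF.2 y hyF.1)
    have hz0F : z0 ∉ F := fun h => hz0S' (hFS' h)
    -- reach z0 outside F
    have hreachz0out : ∀ x, x ∈ S → x ∉ F → Reach r (S \ F) x z0 := by
      intro x hxS hxF
      have key := Relation.ReflTransGen.head_induction_on
        (motive := fun a (_ : Reach r S a z0) => a ∈ S → a ∉ F → Reach r (S \ F) a z0)
        (hstrong x hxS z0 hz0S)
        (fun _ _ => Relation.ReflTransGen.refl)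
        (fun {a c} h' htail ih ha haF => by
          by_cases haz0 : a = z0
          · subst haz0; exact Relation.ReflTransGen.refl
          · have haS' : a ∈ S' := mem_diff_singleton.mpr ⟨ha, haz0⟩
            by_cases hc : c = z0
            · subst hc
              exact Relation.ReflTransGen.single ⟨⟨ha, haF⟩, ⟨hz0S, hz0F⟩, h'.2.2⟩
            · have hcS' : c ∈ S' := mem_diff_singleton.mpr ⟨h'.2.1, hc⟩
              have hcF : c ∉ F := by
                intro hcF
                exact tournament_asymm hT h'.2.2 (houtF c hcF a haS' haF)
              exact Relation.ReflTransGen.head ⟨⟨ha, haF⟩, ⟨h'.2.1, hcF⟩, h'.2.2⟩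
                (ih h'.2.1 hcF))
      exact key hxS hxF
    -- w* : an outside-F in-neighbour of z0
    have hwstar : ∃ w, w ∈ S' ∧ w ∉ F ∧ r w z0 := by
      obtain ⟨u1, hu1S', hu1F⟩ := hFnotall
      have hu1z0 : u1 ≠ z0 := (mem_diff_singleton.mp hu1S').2
      obtain ⟨c, hcSF, hcz0⟩ := reach_tail (hreachz0out u1 hu1S'.1 hu1F) hu1z0
      have hcz0' : c ≠ z0 := r_ne hT hcz0
      exact ⟨c, mem_diff_singleton.mpr ⟨hcSF.1, hcz0'⟩, hcSF.2, hcz0⟩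
    obtain ⟨w, hwS', hwF, hwz0⟩ := hwstar
    have hFfin : F.Finite := hfin.subset hFS
    have hS'card : S'.ncard + 1 = m := by
      rw [← hcard]; exact Set.ncard_diff_singleton_add_one hz0S hfin
    have hF1 : 1 ≤ F.ncard := (Set.ncard_pos hFfin).mpr ⟨k, hkF⟩
    rcases Nat.lt_or_ge F.ncard 4 with h4 | h4
    · have hsmall : F.ncard = 1 ∨ F.ncard = 2 ∨ F.ncard = 3 := by omega
      rcases hsmall with h1 | h2 | h3
      · -- |F| = 1 : F = {k}
        obtain ⟨a, hFa⟩ := Set.ncard_eq_one.mp h1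
        have hka : k = a := by have := hkF; rw [hFa] at this; simpa using this
        have hFeq : F = {k} := by rw [hFa, hka]
        have hm' : 4 ≤ S.ncard := by omega
        have hkdom : ∀ u ∈ S \ {z0}, u ≠ k → r k u := by
          intro u hu huk
          exact houtF k hkF u hu (by rw [hFeq]; simpa using huk)
        have hreachz0'' : ∀ x ∈ S, x ≠ k → Reach r (S \ {k}) x z0 := by
          intro x hx hxk
          have h := hreachz0out x hx (by rw [hFeq]; simpa using hxk)
          rwa [hFeq] at h
        have hwk : w ≠ k := fun he => hwF (by rw [hFeq, he]; rfl)
        exact case_F1 hT S k z0 w hfin hm' hz0S hz0k hkS hkdom hreachz0''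
          (mem_diff_singleton.mp hwS').1 (mem_diff_singleton.mp hwS').2 hwk hwz0
      · -- |F| = 2 : impossible
        exfalso
        obtain ⟨a, b, hab, hFab⟩ := Set.ncard_eq_two.mp h2
        have haF : a ∈ F := by rw [hFab]; exact Set.mem_insert a {b}
        have hbF : b ∈ F := by rw [hFab]; exact Set.mem_insert_of_mem a rfl
        have key : ∀ x y : V, x ∈ F → y ∈ F → (∀ w' ∈ F, w' = x ∨ w' = y) → r x y → False := by
          intro x y hxF hyF hmem hrxy
          have hre : Reach r F y x := hFreach y hyF x hxF
          obtain ⟨c, ⟨_, hcF, hyc⟩, _⟩ := reach_head hre (r_ne hT hrxy).symm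
          rcases hmem c hcF with h0 | h0
          · rw [h0] at hyc; exact tournament_asymm hT hrxy hyc
          · rw [h0] at hyc; exact hT.1 y hyc
        have hmem : ∀ w' ∈ F, w' = a ∨ w' = b := by
          intro w' hw'; rw [hFab] at hw'; simpa using hw'
        rcases tournament_total hT hab with h | h
        · exact key a b haF hbF hmem h
        · exact key b a hbF haF (fun w' hw' => (hmem w' hw').symm) h
      · -- |F| = 3
        exact case_F3 hT S F k z0 w hz0S hz0k hkS hkF hFS' houtF hFreach hreachz0out
          hFfin hwS' hwF hwz0 h3
    · -- |F| ≥ 4 : recurse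
      have hFking : IsKingOn r F k := by
        refine ⟨hkF, fun v hvF hvk => ?_⟩
        rcases hking.2 v (hFS hvF) hvk with h | ⟨u, huS, hku, huv⟩
        · exact Or.inl h
        · have huz0 : u ≠ z0 := fun he => tournament_asymm hT hz0k (he ▸ hku)
          have huS' : u ∈ S' := mem_diff_singleton.mpr ⟨huS, huz0⟩
          have huF : u ∈ F := by
            by_contra huF
            exact tournament_asymm hT huv (houtF v hvF u huS' huF)
          exact Or.inr ⟨u, huF, hku, huv⟩
      have hFstrongOn : IsStrongOn r F := fun x hx y hy => hFreach x hx y hy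
      have hlt : F.ncard < m := by
        have h1 := Set.ncard_le_ncard hFS' (hfin.subset Set.diff_subset)
        omega
      obtain ⟨z, hzF, hzk, hzFstrong, hzFking⟩ :=
        IH F.ncard hlt F k hFfin rfl h4 hFstrongOn hFking
      have hzS : z ∈ S := hFS hzF
      have hzz0 : z ≠ z0 := (mem_diff_singleton.mp (hFS' hzF)).2
      have hsub1 : S \ F ⊆ S \ {z} := fun v hv =>
        mem_diff_singleton.mpr ⟨hv.1, fun he => hv.2 (he ▸ hzF)⟩
      have hwz : w ≠ z := fun he => hwF (he ▸ hzF)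
      have hkz : k ≠ z := hzk.symm
      have hreachz0 : ∀ x ∈ S \ {z}, Reach r (S \ {z}) x z0 := by
        intro x hx
        obtain ⟨hxS, hxz⟩ := mem_diff_singleton.mp hx
        by_cases hxF : x ∈ F
        · have hxw : r x w := houtF x hxF w hwS' hwF
          refine Relation.ReflTransGen.head ⟨hx, mem_diff_singleton.mpr ⟨hwS'.1, hwz⟩, hxw⟩ ?_
          exact reach_mono hsub1 (hreachz0out w hwS'.1 hwF)
        · exact reach_mono hsub1 (hreachz0out x hxS hxF)
      have hfromz0 : ∀ y ∈ S \ {z}, Reach r (S \ {z}) z0 y := by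
        intro y hy
        obtain ⟨hyS, hyz⟩ := mem_diff_singleton.mp hy
        have hz0mem : z0 ∈ S \ {z} := mem_diff_singleton.mpr ⟨hz0S, hzz0.symm⟩
        have hkmem : k ∈ S \ {z} := mem_diff_singleton.mpr ⟨hkS, hkz⟩
        by_cases hyz0 : y = z0
        · subst hyz0; exact Relation.ReflTransGen.refl
        · by_cases hyF : y ∈ F
          · refine Relation.ReflTransGen.head ⟨hz0mem, hkmem, hz0k⟩ ?_
            have hFz : F \ {z} ⊆ S \ {z} := fun v hv =>
              mem_diff_singleton.mpr ⟨hFS hv.1, (mem_diff_singleton.mp hv).2⟩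
            exact reach_mono hFz (hzFstrong k (mem_diff_singleton.mpr ⟨hkF, hkz⟩)
              y (mem_diff_singleton.mpr ⟨hyF, hyz⟩))
          · have hky : r k y := houtF k hkF y (mem_diff_singleton.mpr ⟨hyS, hyz0⟩) hyF
            exact Relation.ReflTransGen.head ⟨hz0mem, hkmem, hz0k⟩
              (Relation.ReflTransGen.single ⟨hkmem, hy, hky⟩)
      refine ⟨z, hzS, hzk, fun x hx y hy => (hreachz0 x hx).trans (hfromz0 y hy),
        mem_diff_singleton.mpr ⟨hkS, hkz⟩, fun v hv hvk => ?_⟩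
      obtain ⟨hvS, hvz⟩ := mem_diff_singleton.mp hv
      by_cases hvz0 : v = z0
      · exact Or.inr ⟨w, mem_diff_singleton.mpr ⟨hwS'.1, hwz⟩,
          houtF k hkF w hwS' hwF, hvz0 ▸ hwz0⟩
      · by_cases hvF : v ∈ F
        · rcases hzFking.2 v (mem_diff_singleton.mpr ⟨hvF, hvz⟩) hvk with h | ⟨u, huFz, h1, h2⟩
          · exact Or.inl h
          · exact Or.inr ⟨u, mem_diff_singleton.mpr
              ⟨hFS (mem_diff_singleton.mp huFz).1, (mem_diff_singleton.mp huFz).2⟩, h1, h2⟩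
        · exact Or.inl (houtF k hkF v (mem_diff_singleton.mpr ⟨hvS, hvz0⟩) hvF)

end LemA

section Main

variable {r : V → V → Prop}

lemma list_covers {S : Set V} (hfin : S.Finite) (l : List V) (hN : l.Nodup)
    (hsub : ∀ v ∈ l, v ∈ S) (hlen : l.length = S.ncard) : ∀ v ∈ S, v ∈ l := by
  classical
  have h1 : l.toFinset ⊆ hfin.toFinset := by
    intro v hv
    rw [Set.Finite.mem_toFinset]
    exact hsub v (List.mem_toFinset.mp hv)
  have h2 : hfin.toFinset.card ≤ l.toFinset.card := by
    rw [List.toFinset_card_of_nodup hN, hlen, Set.ncard_eq_toFinset_card S hfin]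
  have := Finset.eq_of_subset_of_card_le h1 h2
  intro v hv
  rw [← List.mem_toFinset, this, Set.Finite.mem_toFinset]
  exact hv

lemma aux_main (hT : IsTournament r) :
    ∀ m : ℕ, 3 ≤ m → ∀ S : Set V, ∀ k : V, S.Finite → S.ncard = m →
      IsStrongOn r S → IsKingOn r S k →
      ∃ C : ℕ → List V,
        (∀ i, 3 ≤ i → i ≤ m → IsDiCycle r (C i) ∧ (C i).length = i ∧
          (∀ v ∈ C i, v ∈ S) ∧ IsKingOn r {v | v ∈ C i} k) ∧
        (∀ i, 3 ≤ i → i + 1 ≤ m →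
          ∃ z l1 l2, z ∉ C i ∧ C i = l1 ++ l2 ∧ C (i + 1) = l1 ++ z :: l2) := by
  intro m
  induction m using Nat.strong_induction_on with
  | _ m IH =>
  intro hm3 S k hfin hcard hstrong hking
  classical
  have hkS : k ∈ S := hking.1
  rcases eq_or_lt_of_le hm3 with hm3' | hm4
  · -- base case m = 3
    have hSk2 : (S \ {k}).ncard = 2 := by
      have := Set.ncard_diff_singleton_add_one hkS hfin
      omega
    obtain ⟨c, d, hcd, hScd⟩ := Set.ncard_eq_two.mp hSk2
    have hcSk : c ∈ S \ {k} := by rw [hScd]; exact Set.mem_insert c {d}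
    have hdSk : d ∈ S \ {k} := by rw [hScd]; exact Set.mem_insert_of_mem c rfl
    have hSmem : ∀ w ∈ S, w = k ∨ w = c ∨ w = d := by
      intro w hw
      by_cases hwk : w = k
      · exact Or.inl hwk
      · have : w ∈ S \ {k} := mem_diff_singleton.mpr ⟨hw, hwk⟩
        rw [hScd] at this
        right; simpa using this
    -- find the in-neighbour of k
    have hwit : ∃ b ∈ S, b ≠ k ∧ r b k := by
      obtain ⟨b, hbS, hbk⟩ := reach_tail (hstrong c hcSk.1 k hkS) (mem_diff_singleton.mp hcSk).2
      exact ⟨b, hbS, fun he => hT.1 k (he ▸ hbk), hbk⟩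
    obtain ⟨b, hbS, hbk, hrbk⟩ := hwit
    have ha : ∃ a, a ∈ S ∧ a ≠ k ∧ a ≠ b ∧ (∀ w ∈ S, w = k ∨ w = a ∨ w = b) := by
      rcases hSmem b hbS with h | h | h
      · exact absurd h hbk
      · refine ⟨d, hdSk.1, (mem_diff_singleton.mp hdSk).2, by rw [h]; exact hcd.symm, ?_⟩
        intro w' hw'
        rcases hSmem w' hw' with h' | h' | h'
        · exact Or.inl h'
        · exact Or.inr (Or.inr (h'.trans h.symm))
        · exact Or.inr (Or.inl h')
      · refine ⟨c, hcSk.1, (mem_diff_singleton.mp hcSk).2, by rw [h]; exact hcd, ?_⟩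
        intro w' hw'
        rcases hSmem w' hw' with h' | h' | h'
        · exact Or.inl h'
        · exact Or.inr (Or.inl h')
        · exact Or.inr (Or.inr (h'.trans h.symm))
    obtain ⟨a, haS, hak, hab, hSmem'⟩ := ha
    have hka : r k a := by
      by_contra hka
      obtain ⟨c0, ⟨_, hc0S, hkc0⟩, _⟩ := reach_head (hstrong k hkS a haS) (Ne.symm hak)
      rcases hSmem' c0 hc0S with h0 | h0 | h0
      · rw [h0] at hkc0; exact hT.1 k hkc0
      · rw [h0] at hkc0; exact hka hkc0
      · rw [h0] at hkc0; exact tournament_asymm hT hrbk hkc0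
    have hab' : r a b := by
      by_contra hab'
      obtain ⟨c0, ⟨_, hc0S, hac0⟩, _⟩ := reach_head (hstrong a haS k hkS) hak
      rcases hSmem' c0 hc0S with h0 | h0 | h0
      · rw [h0] at hac0; exact tournament_asymm hT hka hac0
      · rw [h0] at hac0; exact hT.1 a hac0
      · rw [h0] at hac0; exact hab' hac0
    refine ⟨fun _ => [k, a, b], ?_, ?_⟩
    · intro i h3 hi
      have hieq : i = 3 := by omega
      subst hieq
      have hkb : k ≠ b := hbk.symm
      refine ⟨⟨?_, by simp, ?_, ?_⟩, by simp, ?_, ?_⟩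
      · have h1 : k ∉ [a, b] := by simp [not_or]; exact ⟨fun h => hak h.symm, fun h => hkb h⟩
        have h2 : a ∉ [b] := by simpa using hab
        exact List.nodup_cons.mpr ⟨h1, List.nodup_cons.mpr ⟨h2, List.nodup_singleton b⟩⟩
      · simp only [List.isChain_cons_cons, List.isChain_singleton, and_true]
        exact List.isChain_cons_cons.mpr ⟨hka, List.isChain_cons_cons.mpr ⟨hab', List.isChain_singleton b⟩⟩
      · intro x y hx hy
        simp at hx hy
        rw [← hx, ← hy]
        exact hrbk
      · intro v hv
        simp at hv
        rcases hv with rfl | rfl | rfl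
        · exact hkS
        · exact haS
        · exact hbS
      · refine ⟨by simp, fun v hv hvk => ?_⟩
        simp at hv
        rcases hv with rfl | rfl | rfl
        · exact absurd rfl hvk
        · exact Or.inl hka
        · exact Or.inr ⟨a, by simp, hka, hab'⟩
    · intro i h3 hi
      exfalso
      omega
  · -- step m ≥ 4
    have hm4' : 4 ≤ m := hm4
    obtain ⟨z, hzS, hzk, hstrong', hking'⟩ :=
      lemA hT m S k hfin hcard hm4' hstrong hking
    have hfin' : (S \ {z}).Finite := hfin.subset Set.diff_subset
    have hcard' : (S \ {z}).ncard = m - 1 := by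
      have := Set.ncard_diff_singleton_add_one hzS hfin
      omega
    obtain ⟨C0, hP0, hC0⟩ := IH (m - 1) (by omega) (by omega) (S \ {z}) k hfin' hcard'
      hstrong' hking'
    obtain ⟨hHcyc, hHlen, hHsub, hHking⟩ := hP0 (m - 1) (by omega) (le_refl _)
    set Ham := C0 (m - 1) with hHamdef
    obtain ⟨hHnodup, hHlen3, hHchain, hHwrap⟩ := hHcyc
    have hcovers : ∀ v ∈ S \ {z}, v ∈ Ham :=
      list_covers hfin' Ham hHnodup hHsub (by rw [hHlen, hcard'])
    have hzHam : z ∉ Ham := fun h => (mem_diff_singleton.mp (hHsub z h)).2 rfl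
    have hkz : k ≠ z := fun he => hzk he.symm
    have hin : ∃ a ∈ Ham, r a z := by
      obtain ⟨c0, hc0S, hc0z⟩ := reach_tail (hstrong k hkS z hzS) hkz
      exact ⟨c0, hcovers c0 (mem_diff_singleton.mpr ⟨hc0S, r_ne hT hc0z⟩), hc0z⟩
    have hout : ∃ b ∈ Ham, r z b := by
      obtain ⟨c0, ⟨_, hc0S, hzc0⟩, _⟩ := reach_head (hstrong z hzS k hkS) hzk
      exact ⟨c0, hcovers c0 (mem_diff_singleton.mpr ⟨hc0S, (r_ne hT hzc0).symm⟩), hzc0⟩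
    obtain ⟨l1, l2, hHl, hnewN, hnewC, hnewW, hnewLen, hnewMem⟩ :=
      cycle_insert hT Ham z hHnodup hHlen3 hHchain hHwrap hzHam hin hout
    set newL := l1 ++ z :: l2 with hnewLdef
    have hnewLsub : ∀ v ∈ newL, v ∈ S := by
      intro v hv
      rcases (hnewMem v).mp hv with rfl | hv'
      · exact hzS
      · exact (hHsub v hv').1
    have hnewLlen : newL.length = m := by
      rw [hnewLen, hHlen]; omega
    have hnewcovers : ∀ v ∈ S, v ∈ newL :=
      list_covers hfin newL hnewN hnewLsub (by rw [hnewLlen, hcard])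
    classical
    refine ⟨Function.update C0 m newL, ?_, ?_⟩
    · intro i h3 hi
      by_cases him : i = m
      · subst him
        rw [Function.update_self]
        refine ⟨⟨hnewN, by omega, hnewC, hnewW⟩, hnewLlen, hnewLsub,
          ⟨hnewcovers k hkS, fun v hv hvk => ?_⟩⟩
        rcases hking.2 v (hnewLsub v hv) hvk with h | ⟨u, huS, h1, h2⟩
        · exact Or.inl h
        · exact Or.inr ⟨u, hnewcovers u huS, h1, h2⟩
      · rw [Function.update_of_ne him]
        obtain ⟨q1, q2, q3, q4⟩ := hP0 i h3 (by omega)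
        exact ⟨q1, q2, fun v hv => (q3 v hv).1, q4⟩
    · intro i h3 hi
      by_cases him : i + 1 = m
      · have him' : i ≠ m := by omega
        refine ⟨z, l1, l2, ?_, ?_, ?_⟩
        · rw [Function.update_of_ne him']
          rw [show i = m - 1 by omega]
          exact hzHam
        · rw [Function.update_of_ne him']
          rw [show i = m - 1 by omega]
          exact hHl
        · rw [him, Function.update_self]
      · have hne1 : i ≠ m := by omega
        rw [Function.update_of_ne hne1, Function.update_of_ne him]
        exact hC0 i h3 (by omega)

end Main

theorem main_theorem_chain [Fintype V] (r : V → V → Prop) (k : V)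
    (hT : IsTournament r) (hS : IsStrong r) (hK : IsKing r k)
    (hn : 3 ≤ Fintype.card V) :
    ∃ C : ℕ → List V,
      (∀ i : ℕ, 3 ≤ i → i ≤ Fintype.card V →
        IsDiCycle r (C i) ∧ (C i).length = i ∧
        IsKingOn r {v | v ∈ C i} k) ∧
      (∀ i : ℕ, 3 ≤ i → i + 1 ≤ Fintype.card V →
        ∃ (z : V) (l1 l2 : List V), z ∉ C i ∧ C i = l1 ++ l2 ∧
          C (i + 1) = l1 ++ z :: l2) := by
  have hstrong : IsStrongOn r (Set.univ : Set V) := by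
    intro x _ y _
    exact Relation.ReflTransGen.mono (p := fun a b => a ∈ (Set.univ : Set V) ∧ b ∈ (Set.univ : Set V) ∧ r a b) (fun a b h => ⟨trivial, trivial, h⟩) _ _ (hS x y)
  have hking : IsKingOn r (Set.univ : Set V) k := by
    refine ⟨trivial, fun v _ hv => ?_⟩
    rcases hK v hv with h | ⟨u, h1, h2⟩
    · exact Or.inl h
    · exact Or.inr ⟨u, trivial, h1, h2⟩
  have hcard : (Set.univ : Set V).ncard = Fintype.card V := by
    rw [Set.ncard_univ, Nat.card_eq_fintype_card]
  obtain ⟨C, h1, h2⟩ := aux_main hT (Fintype.card V) hn Set.univ k Set.finite_univ hcard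
    hstrong hking
  exact ⟨C, fun i h3 hi => ⟨(h1 i h3 hi).1, (h1 i h3 hi).2.1, (h1 i h3 hi).2.2.2⟩, h2⟩
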